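/- Let N ≥ 3 and N < γ < 2N−2, β₀ ∈ [0,1], α₀ ∈ ℝ, q₁ ∈ ℝ. Suppose α₀ > −(1−β₀)γ and max{1, 2β₀, 2(α₀ − β₀γ + N)/(N−γ)} < q₁ < 2(2α₀ + (1−2β₀)γ + 2N−2)/(2N−2−γ). Then there exists ξ ≥ 0 with 1/2 ≤ β₀+ξ ≤ 1 and 2(β₀+ξ) < q₁ < (4(α₀+ξγ) + 4N − 2(γ+2)(β₀+ξ))/(2N−2−γ). -/

import Mathlib

/-!
Write `b = β₀ + ξ`. The numerator of the last bound equals `4 (α₀ - β₀ γ + N) + (2γ - 4) b`, so that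
bound is affine in `b` with positive slope and says that `b` exceeds a threshold `L`. The upper bound
on `q₁` is this inequality at `b = 1`, and the lower bound `2 (α₀ - β₀ γ + N) / (N - γ) < q₁` is it at
`b = q₁ / 2`; hence `L < min 1 (q₁ / 2)`, and `b` can be taken in `[max β₀ (1/2), 1]` with
`L < b < q₁ / 2`.
-/

theorem exists_mem_Icc_mem_Ioo {a b c d : ℝ} (hab : a ≤ b) (hcb : c < b) (had : a < d)
    (hcd : c < d) : ∃ x, a ≤ x ∧ x ≤ b ∧ c < x ∧ x < d := by
  have hc : c < min b d := lt_min hcb hcd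
  refine ⟨max a ((c + min b d) / 2), le_max_left _ _, max_le hab ?_,
    lt_max_of_lt_right (by linarith), max_lt had ?_⟩
  · linarith [min_le_left b d]
  · linarith [min_le_right b d]

theorem lt_add_mul_div_iff_div_lt {q A k x D : ℝ} (hD : 0 < D) (hk : 0 < k) :
    q < (A + k * x) / D ↔ (q * D - A) / k < x := by
  rw [lt_div_iff₀ hD, div_lt_iff₀ hk]
  constructor <;> intro h <;> linarith

theorem stmt_9_general (N γ β₀ α₀ q₁ : ℝ) (hγN : N < γ) (hγ : γ < 2 * N - 2)
    (hβ1 : β₀ ≤ 1)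
    (hq1 : max (max 1 (2 * β₀)) (2 * (α₀ - β₀ * γ + N) / (N - γ)) < q₁)
    (hq2 : q₁ < 2 * (2 * α₀ + (1 - 2 * β₀) * γ + 2 * N - 2) / (2 * N - 2 - γ)) :
    ∃ ξ : ℝ, 0 ≤ ξ ∧ 1 / 2 ≤ β₀ + ξ ∧ β₀ + ξ ≤ 1 ∧ 2 * (β₀ + ξ) < q₁ ∧
      q₁ < (4 * (α₀ + ξ * γ) + 4 * N - 2 * (γ + 2) * (β₀ + ξ)) / (2 * N - 2 - γ) := by
  have hD : 0 < 2 * N - 2 - γ := by linarith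
  have hk : 0 < 2 * γ - 4 := by linarith
  obtain ⟨hq₁_lower, hq₁_crit⟩ := max_lt_iff.mp hq1
  obtain ⟨hq₁_one, hq₁_β₀⟩ := max_lt_iff.mp hq₁_lower
  set L := (q₁ * (2 * N - 2 - γ) - 4 * (α₀ - β₀ * γ + N)) / (2 * γ - 4)
  have hL_one : L < 1 := by
    rw [lt_div_iff₀ hD] at hq2
    rw [div_lt_one hk]
    linarith
  have hL_half : L < q₁ / 2 := by
    rw [div_lt_iff_of_neg (by linarith)] at hq₁_crit
    rw [div_lt_iff₀ hk]
    linarith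
  obtain ⟨b, hb_lo, hb_one, hLb, hb_hi⟩ := exists_mem_Icc_mem_Ioo (a := max β₀ (1 / 2))
    (max_le hβ1 (by norm_num)) hL_one (max_lt (by linarith) (by linarith)) hL_half
  obtain ⟨hβ₀b, hb_half⟩ := max_le_iff.mp hb_lo
  refine ⟨b - β₀, by linarith, by linarith, by linarith, by linarith, ?_⟩
  rw [show 4 * (α₀ + (b - β₀) * γ) + 4 * N - 2 * (γ + 2) * (β₀ + (b - β₀))
      = 4 * (α₀ - β₀ * γ + N) + (2 * γ - 4) * (β₀ + (b - β₀)) by ring,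
    lt_add_mul_div_iff_div_lt hD hk, add_sub_cancel]
  exact hLb

theorem stmt_9 (N γ β₀ α₀ q₁ : ℝ) (hN : 3 ≤ N) (hγN : N < γ) (hγ : γ < 2 * N - 2)
    (hβ0 : 0 ≤ β₀) (hβ1 : β₀ ≤ 1)
    (hα : α₀ > -(1 - β₀) * γ)
    (hq1 : max (max 1 (2 * β₀)) (2 * (α₀ - β₀ * γ + N) / (N - γ)) < q₁)
    (hq2 : q₁ < 2 * (2 * α₀ + (1 - 2 * β₀) * γ + 2 * N - 2) / (2 * N - 2 - γ)) :
    ∃ ξ : ℝ, 0 ≤ ξ ∧ 1 / 2 ≤ β₀ + ξ ∧ β₀ + ξ ≤ 1 ∧ 2 * (β₀ + ξ) < q₁ ∧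
      q₁ < (4 * (α₀ + ξ * γ) + 4 * N - 2 * (γ + 2) * (β₀ + ξ)) / (2 * N - 2 - γ) :=
  stmt_9_general N γ β₀ α₀ q₁ hγN hγ hβ1 hq1 hq2
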